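/- Let y₁ = y₂ = 1/√3. Then the set {(x₁,x₂) ∈ ℝ² : C(x₁,x₂) = 0 and E(x₁,x₂) = 0} is exactly the two-element set {(1/√3, 1/√3), (−1/√3, −1/√3)}. -/

import Mathlib

/-!
For y₁ = y₂ = y one has the identity 3(x₁ - x₂)C - E = (x₁ - x₂)((x₁ - x₂)² + 27y² - 9).
At the cusp 27y² = 9 the right side is the cube (x₁ - x₂)³, so the fiber lies on the diagonal
x₁ = x₂. There E vanishes identically and C reduces to 3(x² - y²), leaving the points ±(y, y).
-/

def fiberC (y₁ y₂ : ℝ) (p : ℝ × ℝ) : ℝ :=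
  p.1^2 + p.1 * p.2 + p.2^2 - 3 * (1 - y₁^2 - y₂^2)

def fiberE (y₁ y₂ : ℝ) (p : ℝ × ℝ) : ℝ :=
  2 * p.1^3 + 3 * p.1^2 * p.2 + 9 * p.1 * y₁^2 + 18 * p.2 * y₁^2
    - 2 * p.2^3 - 3 * p.1 * p.2^2 - 9 * p.2 * y₂^2 - 18 * p.1 * y₂^2

def lagrangianFiber (y₁ y₂ : ℝ) : Set (ℝ × ℝ) :=
  {p | fiberC y₁ y₂ p = 0 ∧ fiberE y₁ y₂ p = 0}

section Diagonal

variable (y : ℝ)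

theorem three_mul_sub_mul_fiberC_sub_fiberE (p : ℝ × ℝ) :
    3 * (p.1 - p.2) * fiberC y y p - fiberE y y p
      = (p.1 - p.2) * ((p.1 - p.2)^2 + 27 * y^2 - 9) := by
  unfold fiberC fiberE
  ring

theorem fiberC_self_self (x : ℝ) : fiberC y y (x, x) = 3 * (x^2 - 1 + 2 * y^2) := by
  unfold fiberC
  ring

theorem fiberE_self_self (x : ℝ) : fiberE y y (x, x) = 0 := by
  unfold fiberE
  ring

variable {y}

theorem fst_eq_snd_of_mem_lagrangianFiber (hy : y^2 = 1 / 3) {p : ℝ × ℝ}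
    (hp : p ∈ lagrangianFiber y y) : p.1 = p.2 := by
  have hcube : (p.1 - p.2)^3 = 0 := by
    have key := three_mul_sub_mul_fiberC_sub_fiberE y p
    rw [hp.1, hp.2] at key
    linear_combination -key - 27 * (p.1 - p.2) * hy
  exact sub_eq_zero.mp (pow_eq_zero_iff three_ne_zero |>.mp hcube)

theorem lagrangianFiber_of_sq_eq_one_div_three (hy : y^2 = 1 / 3) :
    lagrangianFiber y y = {(y, y), (-y, -y)} := by
  ext ⟨x₁, x₂⟩
  simp only [Set.mem_insert_iff, Set.mem_singleton_iff, Prod.ext_iff]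
  constructor
  · intro hp
    obtain rfl : x₁ = x₂ := fst_eq_snd_of_mem_lagrangianFiber hy hp
    have hC := hp.1
    rw [fiberC_self_self] at hC
    have hsq : x₁^2 = y^2 := by linear_combination hC / 3 - 3 * hy
    rcases sq_eq_sq_iff_eq_or_eq_neg.mp hsq with h | h <;> simp [h]
  · rintro (⟨rfl, rfl⟩ | ⟨rfl, rfl⟩) <;> refine ⟨?_, fiberE_self_self _ _⟩ <;>
      rw [fiberC_self_self] <;> linear_combination 9 * hy

end Diagonal

/-- Over the cuspidal point y₁ = y₂ = 1/√3, the fiber is exactly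
`{(1/√3, 1/√3), (−1/√3, −1/√3)}`. -/
theorem stmt_3 (y₁ y₂ : ℝ) (h1 : y₁ = 1 / Real.sqrt 3) (h2 : y₂ = 1 / Real.sqrt 3) :
    {p : ℝ × ℝ |
        p.1^2 + p.1 * p.2 + p.2^2 - 3 * (1 - y₁^2 - y₂^2) = 0 ∧
        2 * p.1^3 + 3 * p.1^2 * p.2 + 9 * p.1 * y₁^2 + 18 * p.2 * y₁^2
          - 2 * p.2^3 - 3 * p.1 * p.2^2 - 9 * p.2 * y₂^2 - 18 * p.1 * y₂^2 = 0}
      = {(1 / Real.sqrt 3, 1 / Real.sqrt 3),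
         (-(1 / Real.sqrt 3), -(1 / Real.sqrt 3))} := by
  subst h1 h2
  have hy : (1 / Real.sqrt 3)^2 = 1 / 3 := by
    rw [div_pow, Real.sq_sqrt (by norm_num : (0 : ℝ) ≤ 3), one_pow]
  exact lagrangianFiber_of_sq_eq_one_div_three hy
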